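/- With the above notation, let p and j be positive integers with gcd(p, j) = 1. Then Γ(jθ/p) ≤ T ∑_{q∈ℤ, q≠0} λ_{qj} |c_{qp}|² + 2θ‖c‖₁²/π + 2(2N+1) j² θ² ‖c‖₁² / (π² T). -/

import Mathlib

/-- The Fourier transform of the indicator function of `[-1/2, 1/2]`:
`φ̂(x) = sin(πx)/(πx)` for `x ≠ 0` and `φ̂(0) = 1`. -/
noncomputable def phihat (x : ℝ) : ℝ :=
  if x = 0 then 1 else Real.sin (Real.pi * x) / (Real.pi * x)

/-!
Put `τ = jθ/p`, so that `a_{k,l}(τ) = T (j l - k p) / (θ j)`, and use `|φ̂ x| ≤ 1 / (π |x|)`.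
If `j ∤ k`, coprimality of `p` and `j` keeps `j l - k p` away from `0` for every `l`, so the
inner sum is at most `j θ ‖c‖₁ / (π T)`. If `k = q j`, the argument is `(T/θ)(l - q p)`: the term
`l = q p` returns `c_{qp}` exactly and the others add at most `θ ‖c‖₁ / (π T)`. Squaring,
weighting by `λ_k ∈ [0, 1]` (with `λ_0 = 0`, supported on `|k| ≤ N`) and summing gives the bound.
-/

open Real

lemma abs_phihat_le_one (x : ℝ) : |phihat x| ≤ 1 := by
  unfold phihat
  split_ifs with hx
  · simp
  · rw [abs_div, div_le_one (abs_pos.2 (mul_ne_zero pi_ne_zero hx))]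
    exact abs_sin_le_abs

lemma abs_phihat_le_inv {x : ℝ} (hx : x ≠ 0) : |phihat x| ≤ 1 / (π * |x|) := by
  rw [phihat, if_neg hx, abs_div, abs_mul, abs_of_pos pi_pos]
  gcongr
  exact abs_sin_le_one _

lemma abs_phihat_mul_intCast_le {a : ℝ} (ha : 0 < a) {n : ℤ} (hn : n ≠ 0) :
    |phihat (a * n)| ≤ 1 / (π * a) := by
  have hn' : (1 : ℝ) ≤ |(n : ℝ)| := by exact_mod_cast Int.one_le_abs hn
  calc |phihat (a * n)| ≤ 1 / (π * |a * n|) :=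
        abs_phihat_le_inv (mul_ne_zero ha.ne' (Int.cast_ne_zero.2 hn))
    _ ≤ 1 / (π * a) := by
        rw [abs_mul, abs_of_pos ha]
        gcongr
        exact le_mul_of_one_le_right ha.le hn'

lemma norm_tsum_mul_le_of_norm_le {ι R : Type*} [NonUnitalSeminormedRing R] {c w : ι → R}
    {ε : ℝ} (hc : Summable (‖c ·‖)) (hw : ∀ i, ‖w i‖ ≤ ε) :
    ‖∑' i, c i * w i‖ ≤ (∑' i, ‖c i‖) * ε :=
  tsum_of_norm_bounded (hc.hasSum.mul_right ε) fun i =>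
    norm_mul_le_of_le le_rfl (hw i)

lemma summable_mul_phihat {c : ℤ → ℂ} (hc : Summable (‖c ·‖)) (x : ℤ → ℝ) :
    Summable fun l => c l * (phihat (x l) : ℂ) :=
  hc.of_norm_bounded fun l => by
    rw [norm_mul, Complex.norm_real, Real.norm_eq_abs]
    exact mul_le_of_le_one_right (norm_nonneg _) (abs_phihat_le_one _)

lemma norm_tsum_mul_phihat_le {c : ℤ → ℂ} (hc : Summable (‖c ·‖)) {a : ℝ} (ha : 0 < a)
    {n : ℤ → ℤ} (hn : ∀ l, n l ≠ 0) :
    ‖∑' l, c l * (phihat (a * n l) : ℂ)‖ ≤ (∑' l, ‖c l‖) / (π * a) := by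
  rw [div_eq_mul_one_div]
  refine norm_tsum_mul_le_of_norm_le hc fun l => ?_
  rw [Complex.norm_real, Real.norm_eq_abs]
  exact abs_phihat_mul_intCast_le ha (hn l)

lemma norm_tsum_mul_phihat_sub_le {c : ℤ → ℂ} (hc : Summable (‖c ·‖)) {a : ℝ} (ha : 0 < a)
    (m : ℤ) :
    ‖∑' l : ℤ, c l * (phihat (a * ((l : ℝ) - m)) : ℂ) - c m‖ ≤ (∑' l, ‖c l‖) / (π * a) := by
  classical
  have hpeak : HasSum (fun l => c l * if l = m then 1 else 0) (c m) := by
    convert hasSum_ite_eq m (c m) using 2 with l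
    split_ifs with h <;> simp [h]
  rw [← ((summable_mul_phihat hc _).hasSum.sub hpeak).tsum_eq, div_eq_mul_one_div]
  simp_rw [← mul_sub]
  refine norm_tsum_mul_le_of_norm_le hc fun l => ?_
  split_ifs with h
  · simp only [h, sub_self, mul_zero, phihat, if_true, Complex.ofReal_one, norm_zero]
    positivity
  · rw [sub_zero, Complex.norm_real, Real.norm_eq_abs, ← Int.cast_sub]
    exact abs_phihat_mul_intCast_le ha (sub_ne_zero.2 h)

noncomputable def innerSum (T θ τ : ℝ) (c : ℤ → ℂ) (k : ℤ) : ℂ :=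
  ∑' l : ℤ, c l * (phihat ((T / θ) * ((l : ℝ) - (k : ℝ) * θ / τ)) : ℂ)

section Resonance

variable {T θ : ℝ} {c : ℤ → ℂ} {p j : ℕ}

lemma innerSum_eq (hθ : θ ≠ 0) (hj : j ≠ 0) (k : ℤ) :
    innerSum T θ (j * θ / p) c k
      = ∑' l : ℤ, c l * (phihat (T / (θ * j) * ((j * l - k * p : ℤ) : ℝ)) : ℂ) := by
  unfold innerSum
  congr! 5 with l
  push_cast
  field_simp

lemma innerSum_mul_eq (hθ : θ ≠ 0) (hj : j ≠ 0) (q : ℤ) :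
    innerSum T θ (j * θ / p) c (q * j)
      = ∑' l : ℤ, c l * (phihat (T / θ * ((l : ℝ) - (q * p : ℤ))) : ℂ) := by
  unfold innerSum
  congr! 5 with l
  push_cast
  field_simp

lemma norm_innerSum_mul_sub_le (hc : Summable (‖c ·‖)) (hT : 0 < T) (hθ : 0 < θ) (hj : j ≠ 0)
    (q : ℤ) :
    ‖innerSum T θ (j * θ / p) c (q * j) - c (q * p)‖ ≤ θ * (∑' l, ‖c l‖) / (π * T) := by
  rw [innerSum_mul_eq hθ.ne' hj]
  exact (norm_tsum_mul_phihat_sub_le hc (div_pos hT hθ) _).trans_eq (by field_simp)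

lemma norm_innerSum_le_of_not_dvd (hc : Summable (‖c ·‖)) (hT : 0 < T) (hθ : 0 < θ)
    (hj : 0 < j) (hpj : Nat.Coprime p j) {k : ℤ} (hk : ¬ (j : ℤ) ∣ k) :
    ‖innerSum T θ (j * θ / p) c k‖ ≤ j * θ * (∑' l, ‖c l‖) / (π * T) := by
  rw [innerSum_eq hθ.ne' hj.ne']
  refine (norm_tsum_mul_phihat_le hc (by positivity) fun l hl => hk ?_).trans_eq (by field_simp)
  have hjp : IsCoprime (j : ℤ) p := Nat.isCoprime_iff_coprime.2 hpj.symm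
  exact hjp.dvd_of_dvd_mul_right ⟨l, (sub_eq_zero.1 hl).symm⟩

end Resonance

noncomputable def resonantNorm (c : ℤ → ℂ) (p j : ℕ) (k : ℤ) : ℝ :=
  if (j : ℤ) ∣ k then ‖c (k / j * p)‖ else 0

lemma sq_le_sq_add_of_le_add {x y A B : ℝ} (hx : 0 ≤ x) (hy : 0 ≤ y) (hA : 0 ≤ A)
    (hAB : A ≤ B) (h : x ≤ y + A) : x ^ 2 ≤ y ^ 2 + 2 * A * y + B ^ 2 := by
  nlinarith

lemma norm_innerSum_sq_le {T θ : ℝ} {c : ℤ → ℂ} {p j : ℕ} (hc : Summable (‖c ·‖))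
    (hT : 0 < T) (hθ : 0 < θ) (hj : 0 < j) (hpj : Nat.Coprime p j) (k : ℤ) :
    ‖innerSum T θ (j * θ / p) c k‖ ^ 2
      ≤ resonantNorm c p j k ^ 2 + 2 * (θ * (∑' l, ‖c l‖) / (π * T)) * resonantNorm c p j k
        + (j * θ * (∑' l, ‖c l‖) / (π * T)) ^ 2 := by
  have hC : 0 ≤ ∑' l, ‖c l‖ := tsum_nonneg fun _ => norm_nonneg _
  have hj1 : (1 : ℝ) ≤ j := by exact_mod_cast hj
  unfold resonantNorm
  split_ifs with hk
  · obtain ⟨q, rfl⟩ := hk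
    have hjZ : (j : ℤ) ≠ 0 := by exact_mod_cast hj.ne'
    have hq : (j : ℤ) * q / j * p = q * p := by rw [Int.mul_ediv_cancel_left _ hjZ]
    have hsub := norm_innerSum_mul_sub_le (p := p) hc hT hθ hj.ne' q
    rw [mul_comm q] at hsub
    rw [hq]
    refine sq_le_sq_add_of_le_add (norm_nonneg _) (norm_nonneg _) (by positivity) ?_ ?_
    · gcongr ?_ / _
      rw [mul_assoc (j : ℝ)]
      exact le_mul_of_one_le_left (by positivity) hj1
    · calc _ ≤ ‖c (q * p)‖ + ‖innerSum T θ (j * θ / p) c (j * q) - c (q * p)‖ :=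
            norm_le_norm_add_norm_sub' _ _
        _ ≤ _ := by gcongr
  · rw [zero_pow two_ne_zero, mul_zero, add_zero, zero_add]
    gcongr
    exact norm_innerSum_le_of_not_dvd hc hT hθ hj hpj hk

lemma tsum_ite_dvd {α : Type*} [AddCommMonoid α] [TopologicalSpace α] {j : ℤ} (hj : j ≠ 0)
    (f : ℤ → α) : ∑' k, (if j ∣ k then f k else 0) = ∑' q, f (q * j) := by
  have hsupp : Function.support (fun k => if j ∣ k then f k else 0) ⊆ Set.range (· * j) := by
    intro k hk
    by_cases hjk : j ∣ k
    · obtain ⟨q, rfl⟩ := hjk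
      exact ⟨q, mul_comm q j⟩
    · simp [hjk] at hk
  rw [← (mul_left_injective₀ hj).tsum_eq hsupp]
  simp

lemma tsum_mul_resonantNorm_pow {c : ℤ → ℂ} {p j : ℕ} (hj : j ≠ 0) (lam : ℤ → ℝ) {n : ℕ}
    (hn : n ≠ 0) :
    ∑' k, lam k * resonantNorm c p j k ^ n = ∑' q, lam (q * j) * ‖c (q * p)‖ ^ n := by
  have hjZ : (j : ℤ) ≠ 0 := by exact_mod_cast hj
  have hite : ∀ k, lam k * resonantNorm c p j k ^ n
      = if (j : ℤ) ∣ k then lam k * ‖c (k / j * p)‖ ^ n else 0 := by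
    intro k
    unfold resonantNorm
    split_ifs <;> simp [hn]
  simp_rw [hite, tsum_ite_dvd hjZ, Int.mul_ediv_cancel _ hjZ]

lemma tsum_mul_resonantNorm_sq {c : ℤ → ℂ} {p j : ℕ} (hj : j ≠ 0) {lam : ℤ → ℝ}
    (hlam0 : lam 0 = 0) :
    ∑' k, lam k * resonantNorm c p j k ^ 2
      = ∑' q : {q : ℤ // q ≠ 0}, lam (q * j) * ‖c (q * p)‖ ^ 2 := by
  rw [tsum_mul_resonantNorm_pow hj lam two_ne_zero]
  refine (tsum_subtype_eq_of_support_subset (s := {q | q ≠ 0}) ?_).symm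
  rintro q hq rfl
  simp [hlam0] at hq

lemma tsum_mul_resonantNorm_le {c : ℤ → ℂ} {p j : ℕ} (hc : Summable (‖c ·‖)) (hp : p ≠ 0)
    (hj : j ≠ 0) {lam : ℤ → ℝ} (hlam : ∀ k, 0 ≤ lam k ∧ lam k ≤ 1) :
    ∑' k, lam k * resonantNorm c p j k ≤ ∑' l, ‖c l‖ := by
  have hinj : Function.Injective (· * (p : ℤ)) := mul_left_injective₀ (by exact_mod_cast hp)
  have hle : ∀ q : ℤ, lam (q * j) * ‖c (q * p)‖ ≤ ‖c (q * p)‖ := fun q =>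
    mul_le_of_le_one_left (norm_nonneg _) (hlam _).2
  have hsum : Summable fun q : ℤ => lam (q * j) * ‖c (q * p)‖ :=
    (hc.comp_injective hinj).of_nonneg_of_le (fun q => mul_nonneg (hlam _).1 (norm_nonneg _)) hle
  have hpow := tsum_mul_resonantNorm_pow (c := c) (p := p) hj lam one_ne_zero
  simp only [pow_one] at hpow
  rw [hpow]
  exact hsum.tsum_le_tsum_of_inj _ hinj (fun _ _ => norm_nonneg _) hle hc

section FinitelySupported

variable {lam : ℤ → ℝ} {s : Finset ℤ}

lemma tsum_mul_sq_le_of_sq_le (hs : ∀ k ∉ s, lam k = 0) (hlam : ∀ k, 0 ≤ lam k)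
    {x u : ℤ → ℝ} {A B : ℝ} (hx : ∀ k, x k ^ 2 ≤ u k ^ 2 + 2 * A * u k + B ^ 2) :
    ∑' k, lam k * x k ^ 2
      ≤ ∑' k, lam k * u k ^ 2 + 2 * A * ∑' k, lam k * u k + B ^ 2 * ∑' k, lam k := by
  have hfin : ∀ f : ℤ → ℝ, ∑' k, lam k * f k = ∑ k ∈ s, lam k * f k := fun f =>
    tsum_eq_sum fun k hk => by rw [hs k hk, zero_mul]
  rw [hfin, hfin, hfin, tsum_eq_sum hs, Finset.mul_sum, Finset.mul_sum,
    ← Finset.sum_add_distrib, ← Finset.sum_add_distrib]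
  exact Finset.sum_le_sum fun k _ => by nlinarith [hx k, hlam k]

lemma tsum_le_card_of_le_one (hs : ∀ k ∉ s, lam k = 0) (hle : ∀ k, lam k ≤ 1) :
    ∑' k, lam k ≤ s.card := by
  rw [tsum_eq_sum hs]
  simpa using Finset.sum_le_sum fun k (_ : k ∈ s) => hle k

end FinitelySupported

theorem stmt_5_general (T θ : ℝ) (hT : 0 < T) (hθ : 0 < θ)
    (c : ℤ → ℂ) (hc : Summable fun l : ℤ => ‖c l‖)
    (N : ℕ) (lam : ℤ → ℝ)
    (hlam0 : lam 0 = 0)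
    (hrange : ∀ k : ℤ, 0 ≤ lam k ∧ lam k ≤ 1)
    (hsupp : ∀ k : ℤ, (N : ℤ) < |k| → lam k = 0)
    (p j : ℕ) (hp : 0 < p) (hj : 0 < j) (hpj : Nat.gcd p j = 1) :
    T * (∑' k : ℤ, lam k *
        ‖∑' l : ℤ, c l *
          (phihat ((T / θ) * ((l : ℝ) - (k : ℝ) * θ / ((j : ℝ) * θ / p))) : ℂ)‖ ^ 2)
      ≤ T * (∑' q : {q : ℤ // q ≠ 0}, lam ((q : ℤ) * j) * ‖c ((q : ℤ) * p)‖ ^ 2)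
        + 2 * θ * (∑' l : ℤ, ‖c l‖) ^ 2 / Real.pi
        + 2 * (2 * N + 1) * (j : ℝ) ^ 2 * θ ^ 2 * (∑' l : ℤ, ‖c l‖) ^ 2
            / (Real.pi ^ 2 * T) := by
  set C := ∑' l : ℤ, ‖c l‖
  have hs : ∀ k ∉ Finset.Icc (-(N : ℤ)) N, lam k = 0 := fun k hk =>
    hsupp k (by rwa [Finset.mem_Icc, ← abs_le, not_le] at hk)
  have hcard : ((Finset.Icc (-(N : ℤ)) N).card : ℝ) = 2 * N + 1 := by
    rw [Int.card_Icc, show (N + 1 - -(N : ℤ)).toNat = 2 * N + 1 by omega]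
    push_cast
    ring
  have hweighted := tsum_mul_sq_le_of_sq_le hs (fun k => (hrange k).1)
    (norm_innerSum_sq_le hc hT hθ hj hpj)
  rw [tsum_mul_resonantNorm_sq hj.ne' hlam0] at hweighted
  have hres := tsum_mul_resonantNorm_le hc hp.ne' hj.ne' hrange
  have hmass := tsum_le_card_of_le_one hs fun k => (hrange k).2
  rw [hcard] at hmass
  calc T * ∑' k : ℤ, lam k * ‖innerSum T θ (j * θ / p) c k‖ ^ 2
      ≤ T * (∑' q : {q : ℤ // q ≠ 0}, lam (q * j) * ‖c (q * p)‖ ^ 2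
          + 2 * (θ * C / (π * T)) * C + (j * θ * C / (π * T)) ^ 2 * (2 * N + 1)) := by
        gcongr
        refine hweighted.trans ?_
        gcongr
    _ ≤ _ := by
        have hexpand : ∀ M : ℝ, T * (M + 2 * (θ * C / (π * T)) * C
              + (j * θ * C / (π * T)) ^ 2 * (2 * N + 1))
            = T * M + 2 * θ * C ^ 2 / π
              + (2 * N + 1) * (j : ℝ) ^ 2 * θ ^ 2 * C ^ 2 / (π ^ 2 * T) := by
          intro M
          field_simp
        rw [hexpand]
        gcongr
        linarith

/-- With `a_{k,l}(τ) = (T/θ)(l - kθ/τ)` and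
`Γ(τ) = T ∑_k λ_k |∑_l c_l φ̂(a_{k,l}(τ))|²`: for positive coprime integers `p`, `j`,
`Γ(jθ/p) ≤ T ∑_{q ≠ 0} λ_{qj} |c_{qp}|² + 2θ‖c‖₁²/π + 2(2N+1) j² θ² ‖c‖₁²/(π²T)`. -/
theorem stmt_5 (T θ : ℝ) (hT : 0 < T) (hθ : 0 < θ)
    (c : ℤ → ℂ) (hc : Summable fun l : ℤ => ‖c l‖)
    (N : ℕ) (hN : 0 < N) (lam : ℤ → ℝ)
    (hlam0 : lam 0 = 0) (hsym : ∀ k : ℤ, lam (-k) = lam k)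
    (hrange : ∀ k : ℤ, 0 ≤ lam k ∧ lam k ≤ 1)
    (hsupp : ∀ k : ℤ, (N : ℤ) < |k| → lam k = 0)
    (p j : ℕ) (hp : 0 < p) (hj : 0 < j) (hpj : Nat.gcd p j = 1) :
    T * (∑' k : ℤ, lam k *
        ‖∑' l : ℤ, c l *
          (phihat ((T / θ) * ((l : ℝ) - (k : ℝ) * θ / ((j : ℝ) * θ / p))) : ℂ)‖ ^ 2)
      ≤ T * (∑' q : {q : ℤ // q ≠ 0}, lam ((q : ℤ) * j) * ‖c ((q : ℤ) * p)‖ ^ 2)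
        + 2 * θ * (∑' l : ℤ, ‖c l‖) ^ 2 / Real.pi
        + 2 * (2 * N + 1) * (j : ℝ) ^ 2 * θ ^ 2 * (∑' l : ℤ, ‖c l‖) ^ 2
            / (Real.pi ^ 2 * T) :=
  stmt_5_general T θ hT hθ c hc N lam hlam0 hrange hsupp p j hp hj hpj
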